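/- arXiv:2003.11483 — 3 statements merged into one kernel-verified Lean document; each statement's English description precedes it below -/
import Mathlib

section
/- Fix n, N ≥ 1 and a point p. There exists a unique trilinear tensor Π : ℝⁿ × (ℝ^{n+N+nN})* × (ℝ^{n+N+nN})* → ℝ such that for every smooth function f on ℝ^{n+N+nN} (variables (x^α, φ^I, π^α_I)), the contraction Π(−, df(p), −) equals σ_f(p), where σ_f has components σ^I_α = ∂f/∂π^α_I and σ^β_{Jα} = −δ^β_α ∂f/∂φ^J (and vanishing x-components). In coordinates, Π = (−∂/∂φ^I ⊗ ∂/∂π^α_I + ∂/∂π^α_I ⊗ ∂/∂φ^I) ⊗ dx^α. -/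
noncomputable section

/-- Tangent space of the extended phase space at a point: `(x^α, φ^I, π^α_I)`
directions. -/
abbrev TPt (n N : ℕ) := (Fin n → ℝ) × (Fin N → ℝ) × (Fin N → Fin n → ℝ)

/-- Basis tangent vector `∂/∂φ^I`. -/
def phiDir (n N : ℕ) (I : Fin N) : TPt n N := (0, Pi.single I 1, 0)

/-- Basis tangent vector `∂/∂π^α_I`. -/
def piDir (n N : ℕ) (I : Fin N) (α : Fin n) : TPt n N :=
  (0, 0, Pi.single I (Pi.single α 1))

/-- The canonical section `σ_f(p)` viewed as a map `ℝⁿ → T_p P`, with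
components `σ^I_α = ∂f/∂π^α_I`, `σ^β_{Jα} = -δ^β_α ∂f/∂φ^J` and vanishing
`x`-components. -/
def sigmaF (n N : ℕ) (f : TPt n N → ℝ) (p : TPt n N) (X : Fin n → ℝ) : TPt n N :=
  (0,
   fun I => ∑ α, X α * fderiv ℝ f p (piDir n N I α),
   fun J β => -(X β * fderiv ℝ f p (phiDir n N J)))

lemma sum_single1 {N : ℕ} (a : Fin N → ℝ) :
    ∑ x, a x • (Pi.single x 1 : Fin N → ℝ) = a := by
  funext j
  simp [Finset.sum_apply, Pi.single_apply, mul_ite]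

lemma sum_single2 {n N : ℕ} (b : Fin N → Fin n → ℝ) :
    ∑ J, ∑ β, b J β • (Pi.single J (Pi.single β 1) : Fin N → Fin n → ℝ) = b := by
  funext J' β'
  simp [Finset.sum_apply, Pi.single_apply, ite_apply, mul_ite]

lemma decomp (n N : ℕ) (a : Fin N → ℝ) (b : Fin N → Fin n → ℝ) :
    ((0, a, b) : TPt n N) =
      (∑ I, a I • phiDir n N I) + ∑ J, ∑ β, b J β • piDir n N J β := by
  have h1 : (∑ I, a I • phiDir n N I) = ((0, a, 0) : TPt n N) := by
    simp only [phiDir, Prod.smul_mk, smul_zero]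
    rw [Prod.ext_iff, Prod.ext_iff]
    refine ⟨?_, ?_, ?_⟩
    · simp [Prod.fst_sum]
    · rw [Prod.snd_sum, Prod.fst_sum]
      simpa using sum_single1 a
    · simp [Prod.snd_sum]
  have h2 : (∑ J, ∑ β, b J β • piDir n N J β) = ((0, 0, b) : TPt n N) := by
    simp only [piDir, Prod.smul_mk, smul_zero]
    rw [Prod.ext_iff, Prod.ext_iff]
    refine ⟨?_, ?_, ?_⟩
    · simp [Prod.fst_sum]
    · simp [Prod.snd_sum, Prod.fst_sum]
    · rw [Prod.snd_sum, Prod.snd_sum]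
      simp only [Prod.snd_sum]
      simpa using sum_single2 b
  rw [h1, h2]
  ext <;> simp

lemma zeta_decomp (n N : ℕ) (ζ : Module.Dual ℝ (TPt n N))
    (a : Fin N → ℝ) (b : Fin N → Fin n → ℝ) :
    ζ ((0, a, b) : TPt n N) =
      (∑ I, a I * ζ (phiDir n N I)) + ∑ J, ∑ β, b J β * ζ (piDir n N J β) := by
  rw [decomp, map_add, map_sum]
  simp [map_sum, map_smul, smul_eq_mul]

lemma keycalc (n N : ℕ) (X : Fin n → ℝ) (A : Fin N → Fin n → ℝ) (B : Fin N → ℝ)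
    (ζ : Module.Dual ℝ (TPt n N)) :
    ζ ((0, fun I => ∑ α, X α * A I α, fun J β => -(X β * B J)) : TPt n N) =
      ∑ α, X α * ∑ I, (-(B I) * ζ (piDir n N I α) + A I α * ζ (phiDir n N I)) := by
  rw [zeta_decomp]
  simp only [Finset.sum_mul, Finset.mul_sum, mul_add, Finset.sum_add_distrib]
  rw [add_comm]
  congr 1
  · rw [Finset.sum_comm]
    exact Finset.sum_congr rfl fun _ _ => Finset.sum_congr rfl fun _ _ => by ring
  · rw [Finset.sum_comm]
    exact Finset.sum_congr rfl fun _ _ => Finset.sum_congr rfl fun _ _ => by ring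

def Bform (n N : ℕ) (α : Fin n) :
    Module.Dual ℝ (TPt n N) →ₗ[ℝ] Module.Dual ℝ (TPt n N) →ₗ[ℝ] ℝ :=
  LinearMap.mk₂ ℝ (fun ξ ζ => ∑ I,
      (-(ξ (phiDir n N I)) * ζ (piDir n N I α) + ξ (piDir n N I α) * ζ (phiDir n N I)))
    (by
      intro ξ₁ ξ₂ ζ
      simp only [LinearMap.add_apply]
      rw [← Finset.sum_add_distrib]
      exact Finset.sum_congr rfl fun _ _ => by ring)
    (by
      intro c ξ ζ
      simp only [LinearMap.smul_apply, smul_eq_mul, Finset.mul_sum]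
      exact Finset.sum_congr rfl fun _ _ => by ring)
    (by
      intro ξ ζ₁ ζ₂
      simp only [LinearMap.add_apply]
      rw [← Finset.sum_add_distrib]
      exact Finset.sum_congr rfl fun _ _ => by ring)
    (by
      intro c ξ ζ
      simp only [LinearMap.smul_apply, smul_eq_mul, Finset.mul_sum]
      exact Finset.sum_congr rfl fun _ _ => by ring)

def Pform (n N : ℕ) :
    (Fin n → ℝ) →ₗ[ℝ] Module.Dual ℝ (TPt n N) →ₗ[ℝ] Module.Dual ℝ (TPt n N) →ₗ[ℝ] ℝ :=
  ∑ α, (LinearMap.proj α : (Fin n → ℝ) →ₗ[ℝ] ℝ).smulRight (Bform n N α)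

lemma Pform_apply (n N : ℕ) (X : Fin n → ℝ) (ξ ζ : Module.Dual ℝ (TPt n N)) :
    Pform n N X ξ ζ = ∑ α, X α * ∑ I,
      (-(ξ (phiDir n N I)) * ζ (piDir n N I α) + ξ (piDir n N I α) * ζ (phiDir n N I)) := by
  simp [Pform, Bform, Finset.sum_apply, LinearMap.sum_apply, Finset.mul_sum]

lemma Pform_prop (n N : ℕ) (p : TPt n N) (f : TPt n N → ℝ) (X : Fin n → ℝ)
    (ζ : Module.Dual ℝ (TPt n N)) :
    Pform n N X (fderiv ℝ f p).toLinearMap ζ = ζ (sigmaF n N f p X) := by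
  rw [sigmaF,
    keycalc n N X (fun I α => fderiv ℝ f p (piDir n N I α))
      (fun J => fderiv ℝ f p (phiDir n N J)) ζ, Pform_apply]
  rfl

lemma unique_formula (n N : ℕ) (p : TPt n N)
    (Pn : (Fin n → ℝ) →ₗ[ℝ] Module.Dual ℝ (TPt n N) →ₗ[ℝ]
        Module.Dual ℝ (TPt n N) →ₗ[ℝ] ℝ)
    (h : ∀ f : TPt n N → ℝ, ContDiff ℝ (⊤ : ℕ∞) f →
        ∀ (X : Fin n → ℝ) (ζ : Module.Dual ℝ (TPt n N)),
          Pn X (fderiv ℝ f p).toLinearMap ζ = ζ (sigmaF n N f p X))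
    (X : Fin n → ℝ) (ξ ζ : Module.Dual ℝ (TPt n N)) :
    Pn X ξ ζ = ∑ α, X α * ∑ I,
      (-(ξ (phiDir n N I)) * ζ (piDir n N I α)
        + ξ (piDir n N I α) * ζ (phiDir n N I)) := by
  set L := LinearMap.toContinuousLinearMap ξ with hL
  have hc : ContDiff ℝ (⊤ : ℕ∞) (⇑L) := L.contDiff
  have hfd : (fderiv ℝ (⇑L) p).toLinearMap = ξ := by
    rw [L.fderiv]
    exact LinearMap.coe_toContinuousLinearMap ξ
  have := h (⇑L) hc X ζ
  rw [hfd] at this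
  rw [this, sigmaF]
  have hA : ∀ I α, fderiv ℝ (⇑L) p (piDir n N I α) = ξ (piDir n N I α) := by
    intro I α; rw [L.fderiv]; exact congrFun (LinearMap.coe_toContinuousLinearMap' ξ) _
  have hB : ∀ J, fderiv ℝ (⇑L) p (phiDir n N J) = ξ (phiDir n N J) := by
    intro J; rw [L.fderiv]; exact congrFun (LinearMap.coe_toContinuousLinearMap' ξ) _
  simp only [hA, hB]
  exact keycalc n N X (fun I α => ξ (piDir n N I α)) (fun J => ξ (phiDir n N J)) ζ

/-- there is a unique trilinear tensor
`Π : ℝⁿ × T_p*P × T_p*P → ℝ` with `Π(-, df(p), -) = σ_f(p)` for all smooth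
`f`, and in coordinates `Π = (-∂φ^I ⊗ ∂π^α_I + ∂π^α_I ⊗ ∂φ^I) ⊗ dx^α`. -/
theorem stmt4 (n N : ℕ) (hn : 1 ≤ n) (hN : 1 ≤ N) (p : TPt n N) :
    (∃! Pn : (Fin n → ℝ) →ₗ[ℝ] Module.Dual ℝ (TPt n N) →ₗ[ℝ]
        Module.Dual ℝ (TPt n N) →ₗ[ℝ] ℝ,
      ∀ f : TPt n N → ℝ, ContDiff ℝ (⊤ : ℕ∞) f →
        ∀ (X : Fin n → ℝ) (ζ : Module.Dual ℝ (TPt n N)),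
          Pn X (fderiv ℝ f p).toLinearMap ζ = ζ (sigmaF n N f p X)) ∧
    (∀ Pn : (Fin n → ℝ) →ₗ[ℝ] Module.Dual ℝ (TPt n N) →ₗ[ℝ]
        Module.Dual ℝ (TPt n N) →ₗ[ℝ] ℝ,
      (∀ f : TPt n N → ℝ, ContDiff ℝ (⊤ : ℕ∞) f →
        ∀ (X : Fin n → ℝ) (ζ : Module.Dual ℝ (TPt n N)),
          Pn X (fderiv ℝ f p).toLinearMap ζ = ζ (sigmaF n N f p X)) →
      ∀ (X : Fin n → ℝ) (ξ ζ : Module.Dual ℝ (TPt n N)),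
        Pn X ξ ζ = ∑ α, X α * ∑ I,
          (-(ξ (phiDir n N I)) * ζ (piDir n N I α)
            + ξ (piDir n N I α) * ζ (phiDir n N I))) := by
  constructor
  · refine ⟨Pform n N, fun f _ X ζ => Pform_prop n N p f X ζ, fun Q hQ => ?_⟩
    refine LinearMap.ext fun X => LinearMap.ext fun ξ => LinearMap.ext fun ζ => ?_
    rw [unique_formula n N p Q hQ X ξ ζ, Pform_apply]
  · intro Pn h X ξ ζ
    exact unique_formula n N p Pn h X ξ ζ
end
end

section
/- Let g : ℝⁿ → GL(n, ℝ) be a smooth field of symmetric invertible matrices (a metric on ℝⁿ with det g < 0), and set H(x, φ, p) = (1/(2√(−det g(x)))) g_{αβ}(x) p^α p^β + (√(−det g(x))/2) m² φ². If smooth (φ, p) : ℝⁿ → ℝ × ℝⁿ satisfy ∂φ/∂x^α = ∂H/∂p^α and Σ_α ∂p^α/∂x^α = −∂H/∂φ, then φ satisfies (1/√(−det g)) ∂_α(√(−det g) g^{αβ} ∂_β φ) + m² φ = 0. -/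
noncomputable section

/-- Partial derivative `∂f/∂x^α` on `ℝⁿ`. -/
def pd (n : ℕ) (f : (Fin n → ℝ) → ℝ) (x : Fin n → ℝ) (α : Fin n) : ℝ :=
  fderiv ℝ f x (Pi.single α 1)

/-- Determinant of the metric `g` at `x`. -/
def detg (n : ℕ) (g : (Fin n → ℝ) → Fin n → Fin n → ℝ) (x : Fin n → ℝ) : ℝ :=
  Matrix.det (Matrix.of fun i j => g x i j)

/-- curved-metric scalar field over a flat base. From Hamilton's
field equations for
`H = (1/(2√(-det g))) g_{αβ} p^α p^β + (√(-det g)/2) m² φ²`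
follows the divergence-form Klein–Gordon equation. -/
theorem stmt8 (n : ℕ) (hn : 1 ≤ n) (m : ℝ)
    (g ginv : (Fin n → ℝ) → Fin n → Fin n → ℝ)
    (hg : ContDiff ℝ (⊤ : ℕ∞) g)
    (hsymm : ∀ x α β, g x α β = g x β α)
    (hinv : ∀ x α β, ∑ γ, g x α γ * ginv x γ β = if α = β then (1 : ℝ) else 0)
    (hdet : ∀ x, detg n g x < 0)
    (φ : (Fin n → ℝ) → ℝ) (p : (Fin n → ℝ) → Fin n → ℝ)
    (hφ : ContDiff ℝ (⊤ : ℕ∞) φ) (hp : ContDiff ℝ (⊤ : ℕ∞) p)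
    (heq1 : ∀ x α, pd n φ x α
      = (1 / Real.sqrt (-(detg n g x))) * ∑ β, g x α β * p x β)
    (heq2 : ∀ x, ∑ α, pd n (fun y => p y α) x α
      = -(Real.sqrt (-(detg n g x)) * m ^ 2 * φ x)) :
    ∀ x, (1 / Real.sqrt (-(detg n g x))) *
        (∑ α, pd n
          (fun y => Real.sqrt (-(detg n g y)) * ∑ β, ginv y α β * pd n φ y β) x α)
      + m ^ 2 * φ x = 0 := by
  have hsq : ∀ y, Real.sqrt (-(detg n g y)) ≠ 0 := fun y =>
    ne_of_gt (Real.sqrt_pos.2 (by linarith [hdet y]))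
  have key : ∀ y α,
      Real.sqrt (-(detg n g y)) * ∑ β, ginv y α β * pd n φ y β = p y α := by
    intro y α
    have hGM : (Matrix.of fun i j => g y i j) * (Matrix.of fun i j => ginv y i j) = 1 := by
      ext i j
      simp [Matrix.mul_apply, hinv y i j, Matrix.one_apply]
    have hMG := mul_eq_one_comm.mp hGM
    have hinv' : ∀ γ, ∑ β, ginv y α β * g y β γ = if α = γ then (1 : ℝ) else 0 := by
      intro γ
      have := congrFun (congrFun hMG α) γ
      simpa [Matrix.mul_apply, Matrix.one_apply] using this
    have h1 : ∑ β, ginv y α β * pd n φ y β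
        = (1 / Real.sqrt (-(detg n g y))) *
            ∑ γ, (∑ β, ginv y α β * g y β γ) * p y γ := by
      simp only [heq1, Finset.mul_sum, Finset.sum_mul]
      rw [Finset.sum_comm]
      exact Finset.sum_congr rfl fun β _ =>
        Finset.sum_congr rfl fun γ _ => by ring
    rw [h1]
    simp only [hinv', ite_mul, one_mul, zero_mul, Finset.sum_ite_eq,
      Finset.mem_univ, if_true]
    rw [← mul_assoc, mul_one_div, div_self (hsq y), one_mul]
  intro x
  have hsum : ∀ α : Fin n,
      pd n (fun y => Real.sqrt (-(detg n g y)) * ∑ β, ginv y α β * pd n φ y β) x α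
      = pd n (fun y => p y α) x α := by
    intro α
    congr 1
    funext y
    exact key y α
  rw [Finset.sum_congr rfl fun α _ => hsum α, heq2 x]
  field_simp [hsq x]
  ring_nf
end
end

section
/- Let g be a smooth Lorentzian metric with Christoffel symbols Γ^μ_{νξ}, and let F_{μν} = ∂_μ A_ν − ∂_ν A_μ, F^{μν} = g^{μσ}g^{νρ}F_{σρ}. If the fields (A, p) satisfy the connection-modified Hamilton equations ½(∂_ν A_μ − ∂_μ A_ν) = −½ g_{μσ}g_{νρ} p^{σρ} and ∂_ν p^{μν} + p^{ξν}Γ^μ_{ξν} + p^{μξ}Γ^ν_{ξν} = −g^{μν}J_ν, then p^{μν} = F^{μν} and ∇_ν F^{νμ} = g^{μν}J_ν, where ∇_ν F^{νμ} = ∂_ν F^{νμ} + Γ^ν_{ξν}F^{ξμ} + Γ^μ_{ξν}F^{νξ} is the covariant divergence for the Levi-Civita connection. -/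
noncomputable section

/-- Christoffel symbols `Γ^α_{βγ}` of the Levi-Civita connection of `g`. -/
def Christoffel (n : ℕ) (g ginv : (Fin n → ℝ) → Fin n → Fin n → ℝ)
    (α β γ : Fin n) (x : Fin n → ℝ) : ℝ :=
  (1 / 2) * ∑ ε, ginv x α ε *
    (pd n (fun y => g y ε γ) x β + pd n (fun y => g y ε β) x γ
      - pd n (fun y => g y β γ) x ε)

/-- Field strength with lower indices: `F_{μν} = ∂_μ A_ν - ∂_ν A_μ`. -/
def Fdn (n : ℕ) (A : (Fin n → ℝ) → Fin n → ℝ) (x : Fin n → ℝ) (μ ν : Fin n) : ℝ :=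
  pd n (fun y => A y ν) x μ - pd n (fun y => A y μ) x ν

/-- Field strength with raised indices: `F^{μν} = g^{μσ} g^{νρ} F_{σρ}`. -/
def Fup (n : ℕ) (ginv : (Fin n → ℝ) → Fin n → Fin n → ℝ)
    (A : (Fin n → ℝ) → Fin n → ℝ) (x : Fin n → ℝ) (μ ν : Fin n) : ℝ :=
  ∑ σ, ∑ ρ, ginv x μ σ * ginv x ν ρ * Fdn n A x σ ρ

/-- curved-space covariant Hamiltonian electromagnetism. The
connection-modified Hamilton equations imply `p^{μν} = F^{μν}` and the curved
inhomogeneous Maxwell equation `∇_ν F^{νμ} = g^{μν} J_ν`. -/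
theorem stmt11 (n : ℕ) (hn : 1 ≤ n)
    (g ginv : (Fin n → ℝ) → Fin n → Fin n → ℝ)
    (hg : ContDiff ℝ (⊤ : ℕ∞) g)
    (hsymm : ∀ x α β, g x α β = g x β α)
    (hinv : ∀ x α β, ∑ γ, g x α γ * ginv x γ β = if α = β then (1 : ℝ) else 0)
    (hdet : ∀ x, detg n g x < 0)
    (A J : (Fin n → ℝ) → Fin n → ℝ) (p : (Fin n → ℝ) → Fin n → Fin n → ℝ)
    (hA : ContDiff ℝ (⊤ : ℕ∞) A) (hJ : ContDiff ℝ (⊤ : ℕ∞) J) (hp : ContDiff ℝ (⊤ : ℕ∞) p)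
    (heq1 : ∀ x μ ν,
      (1 / 2) * (pd n (fun y => A y μ) x ν - pd n (fun y => A y ν) x μ)
        = -(1 / 2) * ∑ σ, ∑ ρ, g x μ σ * g x ν ρ * p x σ ρ)
    (heq2 : ∀ x μ,
      (∑ ν, pd n (fun y => p y μ ν) x ν)
        + (∑ ξ, ∑ ν, p x ξ ν * Christoffel n g ginv μ ξ ν x)
        + (∑ ξ, ∑ ν, p x μ ξ * Christoffel n g ginv ν ξ ν x)
        = -(∑ ν, ginv x μ ν * J x ν)) :
    (∀ x μ ν, p x μ ν = Fup n ginv A x μ ν) ∧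
    (∀ x μ,
      (∑ ν, pd n (fun y => Fup n ginv A y ν μ) x ν)
        + (∑ ξ, ∑ ν, Christoffel n g ginv ν ξ ν x * Fup n ginv A x ξ μ)
        + (∑ ξ, ∑ ν, Christoffel n g ginv μ ξ ν x * Fup n ginv A x ν ξ)
        = ∑ ν, ginv x μ ν * J x ν) := by
  -- F_{μν} = g_{μσ} g_{νρ} p^{σρ}
  have hF : ∀ x μ ν, Fdn n A x μ ν = ∑ σ, ∑ ρ, g x μ σ * g x ν ρ * p x σ ρ := by
    intro x μ ν
    have h := heq1 x μ ν
    unfold Fdn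
    linarith
  -- p = Fup
  have hpF : ∀ x μ ν, p x μ ν = Fup n ginv A x μ ν := by
    intro x μ ν
    set G : Matrix (Fin n) (Fin n) ℝ := Matrix.of (g x) with hG
    set Gi : Matrix (Fin n) (Fin n) ℝ := Matrix.of (ginv x) with hGi
    set P : Matrix (Fin n) (Fin n) ℝ := Matrix.of (p x) with hP
    have hGGi : G * Gi = 1 := by
      ext α β
      simp only [Matrix.mul_apply, Matrix.one_apply, hG, hGi, Matrix.of_apply]
      exact hinv x α β
    have hGiG : Gi * G = 1 := mul_eq_one_comm.mp hGGi
    have hFmat : Matrix.of (Fdn n A x) = G * P * G.transpose := by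
      ext σ ρ
      simp only [Matrix.mul_apply, Matrix.of_apply, Matrix.transpose_apply, hG, hP]
      rw [hF x σ ρ]
      simp only [Finset.sum_mul, Finset.mul_sum]
      rw [Finset.sum_comm]
      exact Finset.sum_congr rfl fun a _ => Finset.sum_congr rfl fun b _ => by ring
    have hFup : Fup n ginv A x μ ν = (Gi * Matrix.of (Fdn n A x) * Gi.transpose) μ ν := by
      simp only [Matrix.mul_apply, Matrix.of_apply, Matrix.transpose_apply, hGi, Fup]
      rw [Finset.sum_comm]
      simp only [Finset.sum_mul, Finset.mul_sum]
      exact Finset.sum_congr rfl fun a _ => Finset.sum_congr rfl fun b _ => by ring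
    rw [hFup, hFmat]
    have : Gi * (G * P * G.transpose) * Gi.transpose = P := by
      have h1 : G.transpose * Gi.transpose = 1 := by
        rw [← Matrix.transpose_mul, hGiG, Matrix.transpose_one]
      calc Gi * (G * P * G.transpose) * Gi.transpose = (Gi * G) * P * (G.transpose * Gi.transpose) := by
            noncomm_ring
        _ = P := by rw [hGiG, h1, Matrix.one_mul, Matrix.mul_one]
    rw [this]
    rfl
  refine ⟨hpF, ?_⟩
  -- antisymmetry of Fdn and Fup
  have hFdnanti : ∀ y (a b : Fin n), Fdn n A y b a = -(Fdn n A y a b) := by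
    intro y a b; unfold Fdn; ring
  have hanti : ∀ y (μ ν : Fin n), Fup n ginv A y ν μ = -(Fup n ginv A y μ ν) := by
    intro y μ ν
    unfold Fup
    rw [Finset.sum_comm, ← Finset.sum_neg_distrib]
    refine Finset.sum_congr rfl fun a _ => ?_
    rw [← Finset.sum_neg_distrib]
    refine Finset.sum_congr rfl fun b _ => ?_
    rw [hFdnanti y a b]; ring
  intro x μ
  have h2 := heq2 x μ
  -- replace p by Fup in heq2
  have hfun : ∀ μ ν, (fun y => p y μ ν) = fun y => Fup n ginv A y μ ν :=
    fun μ ν => funext fun y => hpF y μ ν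
  rw [show (∑ ν, pd n (fun y => p y μ ν) x ν)
      = ∑ ν, pd n (fun y => Fup n ginv A y μ ν) x ν from
      Finset.sum_congr rfl fun ν _ => by rw [hfun μ ν]] at h2
  simp only [hpF] at h2
  -- relate each goal term to heq2 terms via antisymmetry
  have hT1 : (∑ ν, pd n (fun y => Fup n ginv A y ν μ) x ν)
      = -∑ ν, pd n (fun y => Fup n ginv A y μ ν) x ν := by
    rw [← Finset.sum_neg_distrib]
    refine Finset.sum_congr rfl fun ν _ => ?_
    have hf : (fun y => Fup n ginv A y ν μ) = fun y => -(Fup n ginv A y μ ν) :=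
      funext fun y => hanti y μ ν
    rw [hf]
    unfold pd
    rw [fderiv_fun_neg]
    simp
  have hT2 : (∑ ξ, ∑ ν, Christoffel n g ginv ν ξ ν x * Fup n ginv A x ξ μ)
      = -∑ ξ, ∑ ν, Fup n ginv A x μ ξ * Christoffel n g ginv ν ξ ν x := by
    rw [← Finset.sum_neg_distrib]
    refine Finset.sum_congr rfl fun a _ => ?_
    rw [← Finset.sum_neg_distrib]
    refine Finset.sum_congr rfl fun b _ => ?_
    rw [hanti x μ a]; ring
  have hT3 : (∑ ξ, ∑ ν, Christoffel n g ginv μ ξ ν x * Fup n ginv A x ν ξ)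
      = -∑ ξ, ∑ ν, Fup n ginv A x ξ ν * Christoffel n g ginv μ ξ ν x := by
    rw [← Finset.sum_neg_distrib]
    refine Finset.sum_congr rfl fun a _ => ?_
    rw [← Finset.sum_neg_distrib]
    refine Finset.sum_congr rfl fun b _ => ?_
    rw [hanti x a b]; ring
  rw [hT1, hT2, hT3]
  linarith
end
end
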